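/- arXiv:1510.07352 — 4 statements merged into one kernel-verified Lean document; each statement's English description precedes it below -/
import Mathlib

section
/- Define the following vectors of ℂ^B: for each row r ∉ {i,j} the vectors b_{r,1}, …, b_{r,μ_r}; the vectors v_0 := b_{j,1}, v_t := t·b_{i,t} + b_{j,t+1} for 1 ≤ t ≤ μ_j − 1, and v_t := μ_j·b_{i,t} for μ_j ≤ t ≤ μ_i; and the vectors w_t := (μ_j − t)·b_{i,t} − b_{j,t+1} for 1 ≤ t ≤ μ_j − 1. Then: e_2 b_{r,s} = b_{r,s+1} for r ∉ {i,j} and s < μ_r, and e_2 b_{r,μ_r} = 0; e_2 v_t = v_{t+1} for 0 ≤ t ≤ μ_i − 1, and e_2 v_{μ_i} = 0; e_2 w_t = w_{t+1} for 1 ≤ t ≤ μ_j − 2, and e_2 w_{μ_j−1} = 0. Moreover all of these vectors together form a basis of ℂ^B, so they constitute Jordan chains for e_2 of lengths μ_r (for r ∉ {i,j}), μ_i + 1 = λ_i, and μ_j − 1 = λ_j. -/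
open Matrix

/-- The boxes of the right-aligned Young diagram of `μ` (0-based: box `⟨r, s⟩`
corresponds to the box in row `r+1`, `s+1`-th from the right end of its row). -/
abbrev Box (k : ℕ) (μ : Fin k → ℕ) := (r : Fin k) × Fin (μ r)

/-- The nilpotent `e₁` of Jordan type `μ`, sending `b_{r,s} ↦ b_{r,s+1}`. -/
noncomputable def e1 (k : ℕ) (μ : Fin k → ℕ) : Matrix (Box k μ) (Box k μ) ℂ :=
  Matrix.of fun t u => if t.1 = u.1 ∧ t.2.val = u.2.val + 1 then 1 else 0

/-- The nilpotent `e₂ = e₁ + Σ_{s=1}^{μ_j} E_{(i,s),(j,s)}`. -/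
noncomputable def e2 (k : ℕ) (μ : Fin k → ℕ) (i j : Fin k) : Matrix (Box k μ) (Box k μ) ℂ :=
  e1 k μ + Matrix.of fun t u => if t.1 = i ∧ u.1 = j ∧ t.2.val = u.2.val then 1 else 0

/-- `E_m := Σ_{r=i}^{j−m} Σ_{s=1}^{μ_{r+m}} E_{(r+m,s),(r,s)}`. -/
noncomputable def Em (k : ℕ) (μ : Fin k → ℕ) (i j : Fin k) (m : ℕ) :
    Matrix (Box k μ) (Box k μ) ℂ :=
  Matrix.of fun t u =>
    if i ≤ u.1 ∧ t.1 ≤ j ∧ t.1.val = u.1.val + m ∧ t.2.val = u.2.val then 1 else 0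

/-- `m₁ := span{E_{t,u} : s_t < s_u}`. -/
noncomputable def m1 (k : ℕ) (μ : Fin k → ℕ) : Submodule ℂ (Matrix (Box k μ) (Box k μ) ℂ) :=
  Submodule.span ℂ
    {x | ∃ t u : Box k μ, t.2.val < u.2.val ∧ x = Matrix.single t u 1}

/-- `k := span{E_1, …, E_{j−i}}`. -/
noncomputable def fk (k : ℕ) (μ : Fin k → ℕ) (i j : Fin k) :
    Submodule ℂ (Matrix (Box k μ) (Box k μ) ℂ) :=
  Submodule.span ℂ {x | ∃ m : ℕ, 1 ≤ m ∧ m ≤ j.val - i.val ∧ x = Em k μ i j m}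

/-- `m₂ := m₁ + k`. -/
noncomputable def m2 (k : ℕ) (μ : Fin k → ℕ) (i j : Fin k) :
    Submodule ℂ (Matrix (Box k μ) (Box k μ) ℂ) :=
  m1 k μ ⊔ fk k μ i j

/-- The covering partition `λ`. -/
def lam (k : ℕ) (μ : Fin k → ℕ) (i j : Fin k) : Fin k → ℕ :=
  fun r => if r = i then μ i + 1 else if r = j then μ j - 1 else μ r

/-- `χ_a(x) = Tr(e_a x)`. -/
noncomputable def chi (k : ℕ) (μ : Fin k → ℕ) (ea x : Matrix (Box k μ) (Box k μ) ℂ) : ℂ :=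
  (ea * x).trace

/-- The standard basis vector `b_{r,s}` of `ℂ^B` (1-based `s`; zero if out of range). -/
noncomputable def bb (k : ℕ) (μ : Fin k → ℕ) (r : Fin k) (s : ℕ) : Box k μ → ℂ :=
  fun p => if p.1 = r ∧ p.2.val + 1 = s then 1 else 0

/-- The Jordan-chain vectors `v_t`: `v_0 = b_{j,1}`, `v_t = t·b_{i,t} + b_{j,t+1}` for
`1 ≤ t ≤ μ_j − 1`, and `v_t = μ_j·b_{i,t}` for `μ_j ≤ t ≤ μ_i`. -/
noncomputable def vv (k : ℕ) (μ : Fin k → ℕ) (i j : Fin k) (t : ℕ) : Box k μ → ℂ :=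
  if t = 0 then bb k μ j 1
  else ((min t (μ j) : ℕ) : ℂ) • bb k μ i t + bb k μ j (t + 1)

/-- The Jordan-chain vectors `w_t := (μ_j − t)·b_{i,t} − b_{j,t+1}` for
`1 ≤ t ≤ μ_j − 1`. -/
noncomputable def ww (k : ℕ) (μ : Fin k → ℕ) (i j : Fin k) (t : ℕ) : Box k μ → ℂ :=
  ((μ j - t : ℕ) : ℂ) • bb k μ i t - bb k μ j (t + 1)

/-! On the standard basis, `e₂ b_{r,s} = b_{r,s+1} + [r = j, s ≤ μ_j] b_{i,s}`, from which the
chain relations are direct computations. Since `min t μ_j + (μ_j - t) = μ_j`, we have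
`v_t + w_t = μ_j b_{i,t}` for every `t ≥ 1`, and then `b_{j,t+1} = v_t - min t μ_j • b_{i,t}`:
the chain vectors span `ℂ^B`, and there are `∑ λ_r = ∑ μ_r = |B|` of them. -/

section JordanChains

variable {k : ℕ} {μ : Fin k → ℕ} {i j r : Fin k} {s t : ℕ}

lemma bb_eq_zero_of_lt (h : μ r < s) : bb k μ r s = 0 := by
  funext p
  simp only [bb, Pi.zero_apply, ite_eq_right_iff, and_imp]
  rintro rfl hp
  omega

lemma bb_succ_eq_single (p : Box k μ) : bb k μ p.1 (p.2.val + 1) = Pi.single p 1 := by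
  funext q
  obtain ⟨r, s⟩ := p
  obtain ⟨r', s'⟩ := q
  by_cases h : r' = r ∧ (s' : ℕ) = s
  · obtain ⟨rfl, hs⟩ := h
    obtain rfl := Fin.ext hs
    simp [bb]
  · have hq : (⟨r', s'⟩ : Box k μ) ≠ ⟨r, s⟩ := by
      rintro ⟨⟩
      exact h ⟨rfl, rfl⟩
    rw [Pi.single_eq_of_ne hq, bb, if_neg fun hc => h ⟨hc.1, by simpa using hc.2⟩]

lemma e2_mulVec_bb (i j r : Fin k) (hs : 1 ≤ s) :
    e2 k μ i j *ᵥ bb k μ r s =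
      bb k μ r (s + 1) + if r = j ∧ s ≤ μ r then bb k μ i s else 0 := by
  by_cases hsr : s ≤ μ r
  · obtain ⟨s, rfl⟩ := Nat.exists_eq_add_of_le' hs
    rw [bb_succ_eq_single (⟨r, ⟨s, by omega⟩⟩ : Box k μ), mulVec_single]
    funext ⟨pr, ps⟩
    by_cases hrj : r = j
    · subst hrj
      simp [e2, e1, bb, hsr]
    · simp [e2, e1, bb, hrj]
  · rw [bb_eq_zero_of_lt (by omega), mulVec_zero, bb_eq_zero_of_lt (by omega),
      if_neg (fun h => hsr h.2), add_zero]

lemma e2_mulVec_bb_of_ne (hrj : r ≠ j) (hs : 1 ≤ s) :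
    e2 k μ i j *ᵥ bb k μ r s = bb k μ r (s + 1) := by
  rw [e2_mulVec_bb i j r hs, if_neg (fun h => hrj h.1), add_zero]

lemma vv_zero : vv k μ i j 0 = bb k μ j 1 := if_pos rfl

lemma vv_of_ne_zero (ht : t ≠ 0) :
    vv k μ i j t = ((min t (μ j) : ℕ) : ℂ) • bb k μ i t + bb k μ j (t + 1) := if_neg ht

lemma vv_eq_zero_of_lt (hji : μ j ≤ μ i) (ht : μ i < t) : vv k μ i j t = 0 := by
  rw [vv_of_ne_zero (by omega), bb_eq_zero_of_lt ht, bb_eq_zero_of_lt (by omega), smul_zero,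
    add_zero]

lemma ww_eq_zero_of_le (ht : μ j ≤ t) : ww k μ i j t = 0 := by
  rw [ww, Nat.sub_eq_zero_of_le ht, bb_eq_zero_of_lt (r := j) (s := t + 1) (by omega),
    Nat.cast_zero, zero_smul, sub_zero]

lemma vv_add_ww (ht : t ≠ 0) : vv k μ i j t + ww k μ i j t = (μ j : ℂ) • bb k μ i t := by
  have hμ : min t (μ j) + (μ j - t) = μ j := by omega
  calc vv k μ i j t + ww k μ i j t
      = ((min t (μ j) + (μ j - t) : ℕ) : ℂ) • bb k μ i t := by
        rw [vv_of_ne_zero ht, ww, Nat.cast_add, add_smul]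
        abel
    _ = (μ j : ℂ) • bb k μ i t := by rw [hμ]

lemma e2_mulVec_vv (hij : i ≠ j) (hj : 0 < μ j) (t : ℕ) :
    e2 k μ i j *ᵥ vv k μ i j t = vv k μ i j (t + 1) := by
  rcases Nat.eq_zero_or_pos t with rfl | ht
  · rw [zero_add, vv_zero, e2_mulVec_bb i j j le_rfl, if_pos ⟨rfl, hj⟩,
      vv_of_ne_zero one_ne_zero, min_eq_left hj, Nat.cast_one, one_smul, add_comm]
  · rw [vv_of_ne_zero ht.ne', vv_of_ne_zero (by omega), mulVec_add, mulVec_smul,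
      e2_mulVec_bb_of_ne hij ht, e2_mulVec_bb i j j (by omega)]
    by_cases hc : t + 1 ≤ μ j
    · rw [if_pos ⟨rfl, hc⟩, min_eq_left (by omega), min_eq_left hc, Nat.cast_succ, add_smul,
        one_smul]
      abel
    · rw [if_neg (fun h => hc h.2), min_eq_right (by omega), min_eq_right (by omega), add_zero]

lemma e2_mulVec_ww (hij : i ≠ j) (ht : 1 ≤ t) :
    e2 k μ i j *ᵥ ww k μ i j t = ww k μ i j (t + 1) := by
  rw [ww, ww, mulVec_sub, mulVec_smul, e2_mulVec_bb_of_ne hij ht,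
    e2_mulVec_bb i j j (by omega)]
  by_cases hc : t + 1 ≤ μ j
  · have hμ : μ j - t = μ j - (t + 1) + 1 := by omega
    rw [if_pos ⟨rfl, hc⟩, hμ, Nat.cast_succ, add_smul, one_smul]
    abel
  · rw [if_neg (fun h => hc h.2), Nat.sub_eq_zero_of_le (by omega),
      Nat.sub_eq_zero_of_le (by omega)]
    abel

lemma lam_left : lam k μ i j i = μ i + 1 := if_pos rfl

lemma lam_right (hij : i ≠ j) : lam k μ i j j = μ j - 1 := by
  rw [lam, if_neg hij.symm, if_pos rfl]

lemma lam_of_ne (hri : r ≠ i) (hrj : r ≠ j) : lam k μ i j r = μ r := by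
  rw [lam, if_neg hri, if_neg hrj]

lemma sum_lam (hij : i ≠ j) (hj : 0 < μ j) : ∑ r, lam k μ i j r = ∑ r, μ r := by
  have hlam : ∀ r,
      (lam k μ i j r : ℤ) = μ r + (if r = i then 1 else 0) - (if r = j then 1 else 0) := by
    intro r
    by_cases hri : r = i
    · subst hri
      simp [lam_left, hij]
    · by_cases hrj : r = j
      · subst hrj
        rw [lam_right hij, Nat.cast_sub hj]
        simp [hri]
      · simp [lam_of_ne hri hrj, hri, hrj]
  zify
  simp only [hlam, Finset.sum_sub_distrib, Finset.sum_add_distrib, Finset.sum_ite_eq',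
    Finset.mem_univ, if_true]
  ring

noncomputable def chainVec (k : ℕ) (μ : Fin k → ℕ) (i j : Fin k)
    (p : (r : Fin k) × Fin (lam k μ i j r)) : Box k μ → ℂ :=
  if p.1 = i then vv k μ i j p.2.val
  else if p.1 = j then ww k μ i j (p.2.val + 1)
  else bb k μ p.1 (p.2.val + 1)

lemma top_le_span_chainVec (hij : i ≠ j) (hj : 0 < μ j) (hji : μ j ≤ μ i) :
    ⊤ ≤ Submodule.span ℂ (Set.range (chainVec k μ i j)) := by
  set S := Submodule.span ℂ (Set.range (chainVec k μ i j))
  have hv : ∀ t ≤ μ i, vv k μ i j t ∈ S := fun t ht =>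
    Submodule.subset_span ⟨⟨i, ⟨t, by rw [lam_left]; omega⟩⟩, if_pos rfl⟩
  have hw : ∀ t ≠ 0, ww k μ i j t ∈ S := by
    intro t ht
    by_cases htj : t < μ j
    · obtain ⟨t, rfl⟩ := Nat.exists_eq_succ_of_ne_zero ht
      refine Submodule.subset_span ⟨⟨j, ⟨t, by rw [lam_right hij]; omega⟩⟩, ?_⟩
      simp [chainVec, hij.symm]
    · rw [ww_eq_zero_of_le (by omega)]
      exact S.zero_mem
  have hbi : ∀ t ≠ 0, t ≤ μ i → bb k μ i t ∈ S := by
    intro t ht hti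
    have hμ : (μ j : ℂ) ≠ 0 := by exact_mod_cast hj.ne'
    rw [← inv_smul_smul₀ hμ (bb k μ i t), ← vv_add_ww ht]
    exact S.smul_mem _ (S.add_mem (hv t hti) (hw t ht))
  have hbj : ∀ t < μ j, bb k μ j (t + 1) ∈ S := by
    intro t ht
    rcases Nat.eq_zero_or_pos t with rfl | ht0
    · rw [← vv_zero (i := i)]
      exact hv 0 (Nat.zero_le _)
    · have hb :
          bb k μ j (t + 1) = vv k μ i j t - ((min t (μ j) : ℕ) : ℂ) • bb k μ i t := by
        rw [vv_of_ne_zero ht0.ne']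
        abel
      rw [hb]
      exact S.sub_mem (hv t (by omega)) (S.smul_mem _ (hbi t ht0.ne' (by omega)))
  rw [← (Pi.basisFun ℂ (Box k μ)).span_eq, Submodule.span_le]
  rintro _ ⟨⟨r, s⟩, rfl⟩
  rw [Pi.basisFun_apply, ← bb_succ_eq_single]
  by_cases hri : r = i
  · subst hri
    exact hbi _ (Nat.succ_ne_zero _) s.isLt
  · by_cases hrj : r = j
    · subst hrj
      exact hbj _ s.isLt
    · refine Submodule.subset_span
        ⟨⟨r, ⟨s, lam_of_ne (j := j) hri hrj ▸ s.isLt⟩⟩, ?_⟩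
      simp [chainVec, hri, hrj]

lemma card_chainIndex_eq_finrank (hij : i ≠ j) (hj : 0 < μ j) :
    Fintype.card ((r : Fin k) × Fin (lam k μ i j r)) = Module.finrank ℂ (Box k μ → ℂ) := by
  simp only [Module.finrank_pi, Fintype.card_sigma, Fintype.card_fin, sum_lam hij hj]

end JordanChains

theorem stmt8_general
    (k : ℕ) (μ : Fin k → ℕ)
    (hpos : ∀ r, 0 < μ r) (hanti : Antitone μ)
    (i j : Fin k) (hij : i < j)
    :
    (∀ r : Fin k, r ≠ i → r ≠ j →
      (∀ s : ℕ, 1 ≤ s → s < μ r →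
        (e2 k μ i j).mulVec (bb k μ r s) = bb k μ r (s + 1)) ∧
      (e2 k μ i j).mulVec (bb k μ r (μ r)) = 0)
    ∧ (∀ t : ℕ, t < μ i → (e2 k μ i j).mulVec (vv k μ i j t) = vv k μ i j (t + 1))
    ∧ (e2 k μ i j).mulVec (vv k μ i j (μ i)) = 0
    ∧ (∀ t : ℕ, 1 ≤ t → t + 2 ≤ μ j →
        (e2 k μ i j).mulVec (ww k μ i j t) = ww k μ i j (t + 1))
    ∧ (2 ≤ μ j → (e2 k μ i j).mulVec (ww k μ i j (μ j - 1)) = 0)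
    ∧ ∃ basis : Module.Basis ((r : Fin k) × Fin (lam k μ i j r)) ℂ (Box k μ → ℂ),
        ∀ p : (r : Fin k) × Fin (lam k μ i j r),
          (basis p : Box k μ → ℂ) =
            if p.1 = i then vv k μ i j p.2.val
            else if p.1 = j then ww k μ i j (p.2.val + 1)
            else bb k μ p.1 (p.2.val + 1) := by
  have hne : i ≠ j := hij.ne
  have hji : μ j ≤ μ i := hanti hij.le
  refine ⟨fun r _ hrj => ⟨fun s hs _ => e2_mulVec_bb_of_ne hrj hs, ?_⟩,
    fun t _ => e2_mulVec_vv hne (hpos j) t, ?_, fun t ht _ => e2_mulVec_ww hne ht, fun h2 => ?_,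
    ⟨basisOfTopLeSpanOfCardEqFinrank (chainVec k μ i j)
      (top_le_span_chainVec hne (hpos j) hji) (card_chainIndex_eq_finrank hne (hpos j)),
      fun p => by rw [coe_basisOfTopLeSpanOfCardEqFinrank]; rfl⟩⟩
  · rw [e2_mulVec_bb_of_ne hrj (hpos r), bb_eq_zero_of_lt (Nat.lt_succ_self _)]
  · rw [e2_mulVec_vv hne (hpos j), vv_eq_zero_of_lt hji (Nat.lt_succ_self _)]
  · rw [e2_mulVec_ww hne (by omega), Nat.sub_add_cancel (by omega), ww_eq_zero_of_le le_rfl]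

/-- The vectors `b_{r,s}` (`r ∉ {i,j}`), `v_0, …, v_{μ_i}` and
`w_1, …, w_{μ_j−1}` form Jordan chains for `e₂` of lengths `μ_r`, `λ_i = μ_i + 1` and
`λ_j = μ_j − 1`, and all together form a basis of `ℂ^B`. -/
theorem stmt8
    (k : ℕ) (n : ℕ) (μ : Fin k → ℕ)
    (hpos : ∀ r, 0 < μ r) (hanti : Antitone μ)
    (hn : ∑ r : Fin k, μ r = n)
    (i j : Fin k) (hij : i < j)
    (hi : ∀ r, r < i → μ i < μ r)
    (hj : ∀ r, j < r → μ r < μ j)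
    (hcase : (j : ℕ) = (i : ℕ) + 1 ∨ μ i = μ j)
    :
    (∀ r : Fin k, r ≠ i → r ≠ j →
      (∀ s : ℕ, 1 ≤ s → s < μ r →
        (e2 k μ i j).mulVec (bb k μ r s) = bb k μ r (s + 1)) ∧
      (e2 k μ i j).mulVec (bb k μ r (μ r)) = 0)
    ∧ (∀ t : ℕ, t < μ i → (e2 k μ i j).mulVec (vv k μ i j t) = vv k μ i j (t + 1))
    ∧ (e2 k μ i j).mulVec (vv k μ i j (μ i)) = 0
    ∧ (∀ t : ℕ, 1 ≤ t → t + 2 ≤ μ j →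
        (e2 k μ i j).mulVec (ww k μ i j t) = ww k μ i j (t + 1))
    ∧ (2 ≤ μ j → (e2 k μ i j).mulVec (ww k μ i j (μ j - 1)) = 0)
    ∧ ∃ basis : Module.Basis ((r : Fin k) × Fin (lam k μ i j r)) ℂ (Box k μ → ℂ),
        ∀ p : (r : Fin k) × Fin (lam k μ i j r),
          (basis p : Box k μ → ℂ) =
            if p.1 = i then vv k μ i j p.2.val
            else if p.1 = j then ww k μ i j (p.2.val + 1)
            else bb k μ p.1 (p.2.val + 1) :=
  stmt8_general k μ hpos hanti i j hij
end

section
/- The functional χ_2 restricts to a character of the Lie algebra m_2: Tr(e_2(xy − yx)) = 0 for all x, y ∈ m_2. Moreover χ_2 agrees with χ_1 on m_1: Tr(e_2 u) = Tr(e_1 u) for all u ∈ m_1, so that under the decomposition m_2 = m_1 ⊕ k one has χ_2 = (χ_1, κ) where κ := χ_2|_k. -/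
open Matrix

/-!
Grade the matrix unit `E_{t,u}` by the column shift `s_t - s_u`. Then `e₁` has degree `1`,
`e₂ - e₁` and the `E_m` have degree `0`, `m₁` lives in negative degrees, and the trace form pairs
degree `d` only with degree `-d`. Hence `χ₂` kills `[m₁, m₁]` (degree `≤ -2`) and agrees with `χ₁`
on `m₁`. Because `μ` is antitone, `E_m E_{m'} = E_{m+m'}` and each `E_m` commutes with `e₁`, so
`χ₂([u, E_m]) = Tr([E_m, e₂ - e₁] u)` vanishes for `u ∈ m₁`, the commutator having degree `0`.
-/

section Boxes

variable {k : ℕ} {μ : Fin k → ℕ}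

lemma Box.ext_val {b c : Box k μ} (h₁ : b.1 = c.1) (h₂ : b.2.val = c.2.val) : b = c := by
  obtain ⟨r, s⟩ := b
  obtain ⟨r', s'⟩ := c
  obtain rfl : r = r' := h₁
  exact congrArg _ (Fin.ext h₂)

lemma sum_boole_eq_ite {ι R : Type*} [Fintype ι] [AddCommMonoidWithOne R]
    (P : ι → Prop) [DecidablePred P] (q : Prop) [Decidable q]
    (hunique : q → ∃ b₀, ∀ b, P b ↔ b = b₀) (hq : ∀ b, P b → q) :
    ∑ b, (if P b then (1 : R) else 0) = if q then 1 else 0 := by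
  by_cases h : q
  · obtain ⟨b₀, hb₀⟩ := hunique h
    rw [if_pos h, Fintype.sum_eq_single b₀ fun b hb => if_neg fun hPb => hb ((hb₀ b).1 hPb),
      if_pos ((hb₀ b₀).2 rfl)]
  · rw [if_neg h]
    exact Finset.sum_eq_zero fun b _ => if_neg fun hb => h (hq b hb)

noncomputable def rowLink (k : ℕ) (μ : Fin k → ℕ) (i j : Fin k) : Matrix (Box k μ) (Box k μ) ℂ :=
  Matrix.of fun t u => if t.1 = i ∧ u.1 = j ∧ t.2.val = u.2.val then 1 else 0

lemma e2_eq_e1_add_rowLink (i j : Fin k) : e2 k μ i j = e1 k μ + rowLink k μ i j := rfl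

variable {i j : Fin k}

lemma Em_mul_Em (hanti : Antitone μ) (m m' : ℕ) :
    Em k μ i j m * Em k μ i j m' = Em k μ i j (m + m') := by
  ext a c
  simp only [Em, mul_apply, of_apply, ite_zero_mul_ite_zero, mul_one]
  apply sum_boole_eq_ite
  · rintro ⟨hic, haj, hac, hs⟩
    have hlt : c.1.val + m' < k := by omega
    have hb : a.2.val < μ ⟨c.1.val + m', hlt⟩ :=
      a.2.isLt.trans_le (hanti (show c.1.val + m' ≤ a.1.val by omega))
    refine ⟨⟨⟨c.1.val + m', hlt⟩, ⟨a.2.val, hb⟩⟩, fun b => ⟨fun hb => ?_, ?_⟩⟩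
    · exact Box.ext_val (Fin.ext (show b.1.val = c.1.val + m' by omega)) hb.1.2.2.2.symm
    · rintro rfl
      exact ⟨⟨show i.val ≤ c.1.val + m' by omega, haj, show a.1.val = c.1.val + m' + m by omega,
        rfl⟩, ⟨hic, show c.1.val + m' ≤ j.val by omega, rfl, hs⟩⟩
  · rintro b ⟨⟨hib, haj, hab, hs⟩, ⟨hic, hbj, hbc, hs'⟩⟩
    exact ⟨hic, haj, by omega, by omega⟩

lemma Em_mul_e1_apply (hanti : Antitone μ) (m : ℕ) (u t : Box k μ) :
    (Em k μ i j m * e1 k μ) u t =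
      if i ≤ t.1 ∧ u.1 ≤ j ∧ u.1.val = t.1.val + m ∧ u.2.val = t.2.val + 1 then 1 else 0 := by
  simp only [Em, e1, mul_apply, of_apply, ite_zero_mul_ite_zero, mul_one]
  apply sum_boole_eq_ite
  · rintro ⟨hit, huj, hut, hs⟩
    have hb : u.2.val < μ t.1 := u.2.isLt.trans_le (hanti (by omega))
    refine ⟨⟨t.1, ⟨u.2.val, hb⟩⟩, fun b => ⟨fun hb => Box.ext_val hb.2.1 hb.1.2.2.2.symm, ?_⟩⟩
    rintro rfl
    exact ⟨⟨hit, huj, hut, rfl⟩, rfl, hs⟩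
  · rintro b ⟨⟨hib, huj, hub, hs⟩, hbt, hs'⟩
    exact ⟨hbt ▸ hib, huj, by omega, by omega⟩

lemma e1_mul_Em_apply (m : ℕ) (u t : Box k μ) :
    (e1 k μ * Em k μ i j m) u t =
      if i ≤ t.1 ∧ u.1 ≤ j ∧ u.1.val = t.1.val + m ∧ u.2.val = t.2.val + 1 then 1 else 0 := by
  simp only [Em, e1, mul_apply, of_apply, ite_zero_mul_ite_zero, mul_one]
  apply sum_boole_eq_ite
  · rintro ⟨hit, huj, hut, hs⟩
    have hb : t.2.val < μ u.1 := by have := u.2.isLt; omega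
    refine ⟨⟨u.1, ⟨t.2.val, hb⟩⟩, fun b => ⟨fun hb => Box.ext_val hb.1.1.symm hb.2.2.2.2, ?_⟩⟩
    rintro rfl
    exact ⟨⟨rfl, hs⟩, hit, huj, hut, rfl⟩
  · rintro b ⟨⟨hub, hs⟩, hit, hbj, hbt, hs'⟩
    exact ⟨hit, hub ▸ hbj, by omega, by omega⟩

lemma Em_commute_e1 (hanti : Antitone μ) (m : ℕ) : Commute (Em k μ i j m) (e1 k μ) := by
  ext u t
  rw [Em_mul_e1_apply hanti, e1_mul_Em_apply]

lemma Em_commute_Em (hanti : Antitone μ) (m m' : ℕ) :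
    Commute (Em k μ i j m) (Em k μ i j m') := by
  rw [Commute, SemiconjBy, Em_mul_Em hanti, Em_mul_Em hanti, add_comm]

end Boxes

section Columns

variable {k : ℕ} {μ : Fin k → ℕ} {R : Type*} [Ring R]

def PreservesColumn (A : Matrix (Box k μ) (Box k μ) R) : Prop :=
  ∀ t u : Box k μ, t.2.val ≠ u.2.val → A t u = 0

namespace PreservesColumn

variable {A B : Matrix (Box k μ) (Box k μ) R}

lemma mul (hA : PreservesColumn A) (hB : PreservesColumn B) : PreservesColumn (A * B) := by
  intro t u h
  refine Finset.sum_eq_zero fun b _ => show A t b * B b u = 0 from ?_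
  by_cases htb : t.2.val = b.2.val
  · rw [hB b u (htb ▸ h), mul_zero]
  · rw [hA t b htb, zero_mul]

lemma sub (hA : PreservesColumn A) (hB : PreservesColumn B) : PreservesColumn (A - B) :=
  fun t u h => by rw [Matrix.sub_apply, hA t u h, hB t u h, sub_zero]

lemma trace_mul_single_eq_zero (hA : PreservesColumn A) {t u : Box k μ}
    (h : t.2.val ≠ u.2.val) : (A * single t u 1).trace = 0 := by
  rw [trace_mul_single, hA u t h.symm, smul_zero]

end PreservesColumn

lemma preservesColumn_Em (i j : Fin k) (m : ℕ) : PreservesColumn (Em k μ i j m) :=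
  fun _ _ h => if_neg fun hc => h hc.2.2.2

lemma preservesColumn_rowLink (i j : Fin k) : PreservesColumn (rowLink k μ i j) :=
  fun _ _ h => if_neg fun hc => h hc.2.2

end Columns

lemma Matrix.trace_mul_commutator {n R : Type*} [Fintype n] [CommRing R] (A X Y : Matrix n n R) :
    (A * (X * Y - Y * X)).trace = ((Y * A - A * Y) * X).trace := by
  rw [mul_sub, sub_mul, trace_sub, trace_sub, ← Matrix.mul_assoc, trace_mul_cycle,
    Matrix.mul_assoc, Matrix.mul_assoc]

section Traces

variable {k : ℕ} {μ : Fin k → ℕ} {i j : Fin k}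

lemma e2_apply_eq_zero_of_lt {t u : Box k μ} (h : u.2.val + 1 < t.2.val) : e2 k μ i j t u = 0 := by
  rw [e2_eq_e1_add_rowLink, Matrix.add_apply, preservesColumn_rowLink i j t u (by omega), add_zero]
  exact if_neg fun hc => by omega

lemma trace_e2_mul_single_mul_single {t u t' u' : Box k μ} (h : t.2.val < u.2.val)
    (h' : t'.2.val < u'.2.val) :
    (e2 k μ i j * (single t u 1 * single t' u' 1)).trace = 0 := by
  by_cases hu : u = t'
  · subst hu
    rw [single_mul_single_same, one_mul, trace_mul_single, e2_apply_eq_zero_of_lt (by omega),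
      smul_zero]
  · rw [single_mul_single_of_ne (h := hu), mul_zero, trace_zero]

lemma trace_e2_mul_commutator_single_Em (hanti : Antitone μ) {t u : Box k μ}
    (h : t.2.val < u.2.val) (m : ℕ) :
    (e2 k μ i j * (single t u 1 * Em k μ i j m - Em k μ i j m * single t u 1)).trace = 0 := by
  have hcomm : Em k μ i j m * e2 k μ i j - e2 k μ i j * Em k μ i j m
      = Em k μ i j m * rowLink k μ i j - rowLink k μ i j * Em k μ i j m := by
    rw [e2_eq_e1_add_rowLink, mul_add, add_mul, (Em_commute_e1 hanti m).eq]
    abel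
  rw [trace_mul_commutator, hcomm]
  exact (((preservesColumn_Em i j m).mul (preservesColumn_rowLink i j)).sub
    ((preservesColumn_rowLink i j).mul (preservesColumn_Em i j m))).trace_mul_single_eq_zero h.ne

lemma trace_e2_mul_commutator_eq_zero (hanti : Antitone μ) {x y : Matrix (Box k μ) (Box k μ) ℂ}
    (hx : x ∈ m2 k μ i j) (hy : y ∈ m2 k μ i j) : (e2 k μ i j * (x * y - y * x)).trace = 0 := by
  let β : Matrix (Box k μ) (Box k μ) ℂ →ₗ[ℂ] Matrix (Box k μ) (Box k μ) ℂ →ₗ[ℂ] ℂ :=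
    LinearMap.compr₂ (LinearMap.mul ℂ _ - (LinearMap.mul ℂ _).flip)
      (traceLinearMap _ ℂ ℂ ∘ₗ LinearMap.mulLeft ℂ (e2 k μ i j))
  have hβ : ∀ x y, β x y = (e2 k μ i j * (x * y - y * x)).trace := fun _ _ => rfl
  rw [m2, m1, fk, ← Submodule.span_union] at hx hy
  rw [← hβ, ← Submodule.mem_bot ℂ]
  refine LinearMap.BilinMap.apply_apply_mem_of_mem_span ⊥ _ _ β ?_ x y hx hy
  rintro X (⟨t, u, h, rfl⟩ | ⟨m, -, -, rfl⟩) Y (⟨t', u', h', rfl⟩ | ⟨m', -, -, rfl⟩) <;>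
    rw [hβ, Submodule.mem_bot]
  · rw [mul_sub, trace_sub, trace_e2_mul_single_mul_single h h',
      trace_e2_mul_single_mul_single h' h, sub_self]
  · exact trace_e2_mul_commutator_single_Em hanti h m'
  · rw [← neg_sub, mul_neg, trace_neg, trace_e2_mul_commutator_single_Em hanti h' m, neg_zero]
  · rw [(Em_commute_Em hanti m m').eq, sub_self, mul_zero, trace_zero]

lemma trace_rowLink_mul_eq_zero {u : Matrix (Box k μ) (Box k μ) ℂ} (hu : u ∈ m1 k μ) :
    (rowLink k μ i j * u).trace = 0 := by
  suffices m1 k μ ≤ LinearMap.ker (traceLinearMap _ ℂ ℂ ∘ₗ LinearMap.mulLeft ℂ (rowLink k μ i j))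
    from this hu
  refine Submodule.span_le.2 ?_
  rintro _ ⟨t, u, h, rfl⟩
  exact (preservesColumn_rowLink i j).trace_mul_single_eq_zero h.ne

end Traces

theorem stmt10_general
    (k : ℕ) (μ : Fin k → ℕ)
    (hanti : Antitone μ)
    (i j : Fin k)
    :
    (∀ x ∈ m2 k μ i j, ∀ y ∈ m2 k μ i j,
        (e2 k μ i j * (x * y - y * x)).trace = 0)
    ∧ (∀ u ∈ m1 k μ, (e2 k μ i j * u).trace = (e1 k μ * u).trace) := by
  refine ⟨fun x hx y hy => trace_e2_mul_commutator_eq_zero hanti hx hy, fun u hu => ?_⟩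
  rw [e2_eq_e1_add_rowLink, add_mul, trace_add, trace_rowLink_mul_eq_zero hu, add_zero]

/-- `χ₂` restricts to a character of `m₂`, and `χ₂` agrees with `χ₁` on
`m₁`, so that under `m₂ = m₁ ⊕ k` one has `χ₂ = (χ₁, κ)` with `κ := χ₂|_k`. -/
theorem stmt10
    (k : ℕ) (n : ℕ) (μ : Fin k → ℕ)
    (hpos : ∀ r, 0 < μ r) (hanti : Antitone μ)
    (hn : ∑ r : Fin k, μ r = n)
    (i j : Fin k) (hij : i < j)
    (hi : ∀ r, r < i → μ i < μ r)
    (hj : ∀ r, j < r → μ r < μ j)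
    (hcase : (j : ℕ) = (i : ℕ) + 1 ∨ μ i = μ j)
    :
    (∀ x ∈ m2 k μ i j, ∀ y ∈ m2 k μ i j,
        (e2 k μ i j * (x * y - y * x)).trace = 0)
    ∧ (∀ u ∈ m1 k μ, (e2 k μ i j * u).trace = (e1 k μ * u).trace) :=
  stmt10_general k μ hanti i j
end

section
/- The subalgebra k annihilates both characters under the coadjoint action: for every ξ ∈ k and every u ∈ m_1 one has Tr(e_1(ξu − uξ)) = 0 and Tr(e_2(ξu − uξ)) = 0. -/
open Matrix

/-! Since `Tr(e(ξu − uξ)) = Tr((eξ − ξe)u)`, it suffices to control `[e_a, ξ]`. Every `E_m`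
commutes with `e₁`: shifting a box `m` rows down and one step left along its row can be done in
either order, because `μ` is antitone. Hence `[e₂, ξ] = [e₂ − e₁, ξ]`, and both `e₂ − e₁` and `E_m`
preserve the position `s` of a box, so `[e₂, ξ]` does too. Such a matrix `A` pairs to zero with
`m₁`, since `Tr(A E_{t,u}) = A_{u,t}` vanishes when `s_t < s_u`. -/

namespace Matrix

variable {ι R : Type*} [Fintype ι]

lemma trace_mul_commutator_s11 [CommRing R] (e ξ u : Matrix ι ι R) :
    (e * (ξ * u - u * ξ)).trace = ((e * ξ - ξ * e) * u).trace := by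
  rw [mul_sub, sub_mul, trace_sub, trace_sub, trace_mul_cycle' e u ξ, Matrix.mul_assoc,
    Matrix.mul_assoc]

open Classical in
lemma of_ite_mul_of_ite_apply [NonAssocSemiring R] (P Q : ι → ι → Prop)
    [DecidableRel P] [DecidableRel Q] (hP : ∀ p r r', P p r → P p r' → r = r') (p q : ι) :
    (of (fun p r => if P p r then (1 : R) else 0) * of (fun r q => if Q r q then 1 else 0) :
      Matrix ι ι R) p q = if ∃ r, P p r ∧ Q r q then 1 else 0 := by
  rw [mul_apply]
  split_ifs with h
  · obtain ⟨r, hpr, hrq⟩ := h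
    rw [Finset.sum_eq_single r (fun r' _ hr' => by
      rw [of_apply, if_neg fun h => hr' (hP p r' r h hpr), zero_mul])
      (by simp)]
    simp [hpr, hrq]
  · refine Finset.sum_eq_zero fun r _ => ?_
    by_cases hpr : P p r <;> simp_all

variable (R) in
def blockDiagonalSubalgebra [DecidableEq ι] [CommSemiring R] {β : Type*} (ℓ : ι → β) :
    Subalgebra R (Matrix ι ι R) where
  carrier := {A | ∀ p q, ℓ p ≠ ℓ q → A p q = 0}
  mul_mem' {A B} hA hB p q hpq := by
    rw [mul_apply]
    refine Finset.sum_eq_zero fun r _ => ?_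
    by_cases hpr : ℓ p = ℓ r
    · rw [hB r q (hpr ▸ hpq), mul_zero]
    · rw [hA p r hpr, zero_mul]
  add_mem' {A B} hA hB p q hpq := by simp [hA p q hpq, hB p q hpq]
  algebraMap_mem' c p q hpq := by
    simp [algebraMap_eq_diagonal, diagonal_apply_ne _ (ne_of_apply_ne ℓ hpq)]

lemma trace_mul_single_eq_zero [DecidableEq ι] [CommSemiring R] {β : Type*} {ℓ : ι → β}
    {A : Matrix ι ι R} (hA : A ∈ blockDiagonalSubalgebra R ℓ) {t u : ι} (htu : ℓ t ≠ ℓ u)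
    (c : R) : (A * single t u c).trace = 0 := by
  rw [trace_mul_single, hA u t htu.symm, smul_zero]

end Matrix

lemma Box.ext_val_s11 {k : ℕ} {μ : Fin k → ℕ} {a b : Box k μ}
    (h₁ : a.1 = b.1) (h₂ : (a.2 : ℕ) = b.2) : a = b := by
  obtain ⟨a₁, a₂⟩ := a
  obtain ⟨b₁, b₂⟩ := b
  cases h₁
  simp_all [Fin.ext_iff]

section YoungDiagram

variable {k : ℕ} {μ : Fin k → ℕ}

lemma commute_e1_Em (hanti : Antitone μ) (i j : Fin k) (m : ℕ) :
    Commute (e1 k μ) (Em k μ i j m) := by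
  refine ext fun p q => ?_
  rw [e1, Em, of_ite_mul_of_ite_apply _ _ ?e1_functional,
    of_ite_mul_of_ite_apply _ _ ?Em_functional]
  · congr 1
    apply propext
    constructor
    · rintro ⟨r, ⟨hpr₁, hpr₂⟩, hiq, hrj, hrq₁, hrq₂⟩
      rw [← hpr₁] at hrj hrq₁
      have hqp : q.1 ≤ p.1 := Fin.le_def.2 (by omega)
      exact ⟨⟨q.1, p.2, p.2.2.trans_le (hanti hqp)⟩, ⟨hiq, hrj, hrq₁, rfl⟩, rfl,
        show (p.2 : ℕ) = q.2 + 1 by omega⟩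
    · rintro ⟨r, ⟨hir, hpj, hpr₁, hpr₂⟩, hrq₁, hrq₂⟩
      rw [hrq₁] at hir hpr₁
      exact ⟨⟨p.1, q.2, by omega⟩, ⟨rfl, show (p.2 : ℕ) = q.2 + 1 by omega⟩, hir, hpj,
        hpr₁, rfl⟩
  case e1_functional =>
    rintro p r r' ⟨h₁, h₂⟩ ⟨h₁', h₂'⟩
    exact Box.ext_val_s11 (h₁.symm.trans h₁') (by omega)
  case Em_functional =>
    rintro p r r' ⟨-, -, h₁, h₂⟩ ⟨-, -, h₁', h₂'⟩
    exact Box.ext_val_s11 (Fin.ext (by omega)) (by omega)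

lemma commute_e1_of_mem_fk (hanti : Antitone μ) {i j : Fin k}
    {ξ : Matrix (Box k μ) (Box k μ) ℂ} (hξ : ξ ∈ fk k μ i j) : Commute (e1 k μ) ξ := by
  have hle : fk k μ i j ≤ Subalgebra.toSubmodule (Subalgebra.centralizer ℂ {e1 k μ}) := by
    refine Submodule.span_le.2 ?_
    rintro _ ⟨m, -, -, rfl⟩ _ rfl
    exact commute_e1_Em hanti i j m
  exact (Subalgebra.mem_centralizer_iff ℂ).1 (hle hξ) _ rfl

lemma fk_le_blockDiagonal (i j : Fin k) :
    fk k μ i j ≤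
      Subalgebra.toSubmodule (blockDiagonalSubalgebra ℂ fun b : Box k μ => (b.2 : ℕ)) := by
  refine Submodule.span_le.2 ?_
  rintro _ ⟨m, -, -, rfl⟩ p q hpq
  simp [Em, hpq]

lemma e2_sub_e1_mem_blockDiagonal (i j : Fin k) :
    e2 k μ i j - e1 k μ ∈ blockDiagonalSubalgebra ℂ fun b : Box k μ => (b.2 : ℕ) :=
  fun p q hpq => by simp [e2, hpq]

lemma e2_mul_sub_mul_e2_mem_blockDiagonal (hanti : Antitone μ) {i j : Fin k}
    {ξ : Matrix (Box k μ) (Box k μ) ℂ} (hξ : ξ ∈ fk k μ i j) :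
    e2 k μ i j * ξ - ξ * e2 k μ i j ∈
      blockDiagonalSubalgebra ℂ fun b : Box k μ => (b.2 : ℕ) := by
  have hsplit : e2 k μ i j * ξ - ξ * e2 k μ i j =
      (e2 k μ i j - e1 k μ) * ξ - ξ * (e2 k μ i j - e1 k μ) := by
    rw [sub_mul, mul_sub, (commute_e1_of_mem_fk hanti hξ).eq]
    abel
  have hF := e2_sub_e1_mem_blockDiagonal (μ := μ) i j
  have hξ' := fk_le_blockDiagonal i j hξ
  rw [hsplit]
  exact sub_mem (mul_mem hF hξ') (mul_mem hξ' hF)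

lemma trace_mul_eq_zero_of_mem_m1 {A : Matrix (Box k μ) (Box k μ) ℂ}
    (hA : A ∈ blockDiagonalSubalgebra ℂ fun b : Box k μ => (b.2 : ℕ))
    {u : Matrix (Box k μ) (Box k μ) ℂ} (hu : u ∈ m1 k μ) : (A * u).trace = 0 := by
  induction hu using Submodule.span_induction with
  | mem _ h =>
    obtain ⟨t, u, htu, rfl⟩ := h
    exact trace_mul_single_eq_zero hA htu.ne 1
  | zero => simp
  | add x y _ _ hx hy => rw [mul_add, trace_add, hx, hy, add_zero]
  | smul c x _ hx => rw [mul_smul_comm, trace_smul, hx, smul_zero]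

end YoungDiagram

theorem stmt11_general
    (k : ℕ) (μ : Fin k → ℕ)
    (hanti : Antitone μ)
    (i j : Fin k)
    :
    ∀ ξ ∈ fk k μ i j, ∀ u ∈ m1 k μ,
      (e1 k μ * (ξ * u - u * ξ)).trace = 0 ∧
      (e2 k μ i j * (ξ * u - u * ξ)).trace = 0 := by
  intro ξ hξ u hu
  rw [trace_mul_commutator_s11, trace_mul_commutator_s11,
    sub_eq_zero.2 (commute_e1_of_mem_fk hanti hξ).eq, zero_mul, trace_zero]
  exact ⟨rfl, trace_mul_eq_zero_of_mem_m1 (e2_mul_sub_mul_e2_mem_blockDiagonal hanti hξ) hu⟩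

/-- The subalgebra `k` annihilates both characters under the coadjoint
action. -/
theorem stmt11
    (k : ℕ) (n : ℕ) (μ : Fin k → ℕ)
    (hpos : ∀ r, 0 < μ r) (hanti : Antitone μ)
    (hn : ∑ r : Fin k, μ r = n)
    (i j : Fin k) (hij : i < j)
    (hi : ∀ r, r < i → μ i < μ r)
    (hj : ∀ r, j < r → μ r < μ j)
    (hcase : (j : ℕ) = (i : ℕ) + 1 ∨ μ i = μ j)
    :
    ∀ ξ ∈ fk k μ i j, ∀ u ∈ m1 k μ,
      (e1 k μ * (ξ * u - u * ξ)).trace = 0 ∧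
      (e2 k μ i j * (ξ * u - u * ξ)).trace = 0 :=
  stmt11_general k μ hanti i j
end

section
/- The subalgebra m_1 is a Premet subalgebra for e_1: (i) if x ∈ m_1 and [e_1, x] = 0 then x = 0 (m_1 meets the centralizer of e_1 trivially); (ii) 2·dim_ℂ m_1 = n² − Σ_{a,b=1}^{k} min(μ_a, μ_b), i.e. dim m_1 is half the dimension of the adjoint nilpotent orbit of e_1; and (iii) Tr(e_1(xy − yx)) = 0 for all x, y ∈ m_1, i.e. χ_1 restricts to a character of the Lie algebra m_1. -/
open Matrix

/-! Grade matrices by `deg E_{t,u} = s_t - s_u`: then `m₁` is spanned by the matrix units of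
negative degree and `e₁` is homogeneous of degree one. If `x ∈ m₁` commutes with `e₁`, then
`x_{(r,s),(r',s'+1)} = x_{(r,s-1),(r',s')}`, and descending in `s` reaches the row `s = 0`, where
`e₁ x` vanishes. The functional `Tr(e₁ ·)` only sees the degree `-1` part of a matrix, while
`[m₁, m₁]` lives in degrees `≤ -2`. For the dimension, swapping the two boxes matches the pairs
with `s_t < s_u` with those with `s_t > s_u`, and the pairs with `s_t = s_u` in rows `a, b`
number `min(μ_a, μ_b)`. -/

open Finset

namespace Matrix

variable {R m n : Type*} [DecidableEq m] [DecidableEq n]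

theorem apply_eq_zero_of_mem_span_single [Semiring R] {p : m → n → Prop} {x : Matrix m n R}
    (hx : x ∈ Submodule.span R {A : Matrix m n R | ∃ i j, p i j ∧ A = single i j 1})
    {i : m} {j : n} (hij : ¬ p i j) : x i j = 0 := by
  induction hx using Submodule.span_induction with
  | mem A hA =>
    obtain ⟨i', j', hp, rfl⟩ := hA
    rw [single_apply_of_ne]
    rintro ⟨rfl, rfl⟩
    exact hij hp
  | zero => rfl
  | add _ _ _ _ ha hb => rw [add_apply, ha, hb, add_zero]
  | smul c _ _ h => rw [smul_apply, h, smul_zero]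

theorem finrank_span_single [Field R] [Fintype m] [Fintype n] (p : m → n → Prop) :
    Module.finrank R (Submodule.span R {A : Matrix m n R | ∃ i j, p i j ∧ A = single i j 1}) =
      Nat.card {q : m × n // p q.1 q.2} := by
  classical
  have hrange : {A : Matrix m n R | ∃ i j, p i j ∧ A = single i j 1} =
      Set.range (stdBasis R m n ∘ Subtype.val : {q : m × n // p q.1 q.2} → _) := by
    ext A
    simp [stdBasis_eq_single, eq_comm]
  rw [hrange, Nat.card_eq_fintype_card,
    finrank_span_eq_card ((stdBasis R m n).linearIndependent.comp _ Subtype.val_injective)]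

end Matrix

theorem two_mul_card_lt_add_card_eq {α β : Type*} [Fintype α] [LinearOrder β] (f : α → β) :
    2 * #{q : α × α | f q.1 < f q.2} + #{q : α × α | f q.1 = f q.2} =
      Fintype.card α ^ 2 := by
  have hswap : #{q : α × α | f q.2 < f q.1} = #{q : α × α | f q.1 < f q.2} :=
    card_equiv (Equiv.prodComm α α) (by simp)
  have htrichotomy : #{q : α × α | f q.1 < f q.2} + #{q : α × α | f q.2 < f q.1} +
      #{q : α × α | f q.1 = f q.2} = Fintype.card (α × α) := by
    rw [card_filter, card_filter, card_filter, ← sum_add_distrib, ← sum_add_distrib,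
      Fintype.card, card_eq_sum_ones]
    refine sum_congr rfl fun q _ => ?_
    rcases lt_trichotomy (f q.1) (f q.2) with h | h | h
    · simp [h, h.ne, h.not_gt]
    · simp [h]
    · simp [h, h.ne', h.not_gt]
  rw [Fintype.card_prod, ← sq] at htrichotomy
  omega

theorem card_filter_fin_val_eq (A B : ℕ) :
    #{q : Fin A × Fin B | q.1.val = q.2.val} = min A B := by
  rw [← Fin.card_filter_val_lt]
  refine card_bij (fun q _ => q.1) ?_ ?_ ?_
  · simp only [mem_filter, mem_univ, true_and]
    intro q hq
    exact hq ▸ q.2.isLt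
  · simp only [mem_filter, mem_univ, true_and]
    intro q hq q' hq' h
    ext <;> omega
  · simp only [mem_filter, mem_univ, true_and]
    intro s hs
    exact ⟨(s, ⟨s, hs⟩), rfl, rfl⟩

theorem card_filter_sigma_fin_val_eq {ι : Type*} [Fintype ι] (μ : ι → ℕ) :
    #{q : (Σ i, Fin (μ i)) × (Σ i, Fin (μ i)) | q.1.2.val = q.2.2.val} =
      ∑ a, ∑ b, min (μ a) (μ b) := by
  rw [card_filter, Fintype.sum_prod_type]
  simp only [Fintype.sum_sigma]
  refine sum_congr rfl fun a _ => ?_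
  rw [sum_comm]
  refine sum_congr rfl fun b _ => ?_
  rw [← card_filter_fin_val_eq, card_filter, Fintype.sum_prod_type]

theorem Sigma.fin_ext {ι : Type*} {μ : ι → ℕ} {v w : Σ i, Fin (μ i)} (h₁ : v.1 = w.1)
    (h₂ : v.2.val = w.2.val) : v = w :=
  Sigma.ext h₁ ((Fin.heq_ext_iff (congrArg μ h₁)).2 h₂)

section Box

variable {k : ℕ} {μ : Fin k → ℕ}

theorem apply_eq_zero_of_mem_m1 {x : Matrix (Box k μ) (Box k μ) ℂ} (hx : x ∈ m1 k μ)
    {t u : Box k μ} (h : u.2.val ≤ t.2.val) : x t u = 0 :=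
  Matrix.apply_eq_zero_of_mem_span_single hx h.not_gt

theorem e1_mul_apply_of_val_eq_zero (x : Matrix (Box k μ) (Box k μ) ℂ) {r : Fin k}
    {s : Fin (μ r)} (hs : s.val = 0) (u : Box k μ) : (e1 k μ * x) ⟨r, s⟩ u = 0 := by
  refine sum_eq_zero fun v _ => ?_
  simp only [e1, of_apply]
  rw [if_neg (by omega), zero_mul]

theorem e1_mul_apply_of_val_eq_succ (x : Matrix (Box k μ) (Box k μ) ℂ) {r : Fin k}
    {s s' : Fin (μ r)} (h : s.val = s'.val + 1) (u : Box k μ) :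
    (e1 k μ * x) ⟨r, s⟩ u = x ⟨r, s'⟩ u := by
  rw [Matrix.mul_apply, sum_eq_single (⟨r, s'⟩ : Box k μ)]
  · simp [e1, h]
  · intro v _ hv
    simp only [e1, of_apply]
    rw [if_neg, zero_mul]
    rintro ⟨h₁, h₂⟩
    exact hv (Sigma.fin_ext h₁.symm (by dsimp only at h₂ ⊢; omega))
  · simp

theorem mul_e1_apply_of_val_eq_succ (x : Matrix (Box k μ) (Box k μ) ℂ) (t : Box k μ)
    {r : Fin k} {s s' : Fin (μ r)} (h : s'.val = s.val + 1) :
    (x * e1 k μ) t ⟨r, s⟩ = x t ⟨r, s'⟩ := by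
  rw [Matrix.mul_apply, sum_eq_single (⟨r, s'⟩ : Box k μ)]
  · simp [e1, h]
  · intro v _ hv
    simp only [e1, of_apply]
    rw [if_neg, mul_zero]
    rintro ⟨h₁, h₂⟩
    exact hv (Sigma.fin_ext h₁ (by dsimp only at h₂ ⊢; omega))
  · simp

theorem apply_eq_zero_of_commute_e1 {x : Matrix (Box k μ) (Box k μ) ℂ}
    (hx : e1 k μ * x = x * e1 k μ) {r r' : Fin k} {s : Fin (μ r)} {s' : Fin (μ r')}
    (h : s.val < s'.val) : x ⟨r, s⟩ ⟨r', s'⟩ = 0 := by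
  obtain ⟨s'', hs''⟩ : ∃ s'' : Fin (μ r'), s'.val = s''.val + 1 :=
    ⟨⟨s'.val - 1, by omega⟩, by dsimp only; omega⟩
  rw [← mul_e1_apply_of_val_eq_succ x _ hs'', ← hx]
  by_cases hs : s.val = 0
  · exact e1_mul_apply_of_val_eq_zero x hs _
  · rw [e1_mul_apply_of_val_eq_succ x (s' := ⟨s.val - 1, by omega⟩) (by dsimp only; omega)]
    exact apply_eq_zero_of_commute_e1 hx (by dsimp only; omega)
termination_by s.val
decreasing_by omega

theorem eq_zero_of_mem_m1_of_commute_e1 {x : Matrix (Box k μ) (Box k μ) ℂ} (hm : x ∈ m1 k μ)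
    (hx : e1 k μ * x = x * e1 k μ) : x = 0 := by
  ext ⟨r, s⟩ ⟨r', s'⟩
  rcases lt_or_ge s.val s'.val with h | h
  · exact apply_eq_zero_of_commute_e1 hx h
  · exact apply_eq_zero_of_mem_m1 hm h

theorem mul_apply_eq_zero_of_mem_m1 {x y : Matrix (Box k μ) (Box k μ) ℂ} (hx : x ∈ m1 k μ)
    (hy : y ∈ m1 k μ) {t u : Box k μ} (h : u.2.val ≤ t.2.val + 1) : (x * y) t u = 0 := by
  rw [Matrix.mul_apply]
  refine sum_eq_zero fun v _ => ?_
  rcases le_or_gt v.2.val t.2.val with hv | hv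
  · rw [apply_eq_zero_of_mem_m1 hx hv, zero_mul]
  · rw [apply_eq_zero_of_mem_m1 hy (by omega), mul_zero]

theorem trace_e1_mul_eq_zero {z : Matrix (Box k μ) (Box k μ) ℂ}
    (hz : ∀ t u : Box k μ, u.2.val ≤ t.2.val + 1 → z t u = 0) : (e1 k μ * z).trace = 0 := by
  refine sum_eq_zero fun t _ => sum_eq_zero fun u _ => ?_
  simp only [e1, of_apply]
  split_ifs with h
  · rw [hz u t h.2.le, mul_zero]
  · rw [zero_mul]

theorem finrank_m1 :
    Module.finrank ℂ (m1 k μ) = #{q : Box k μ × Box k μ | q.1.2.val < q.2.2.val} := by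
  rw [m1, Matrix.finrank_span_single, Nat.card_eq_fintype_card, Fintype.card_subtype]

theorem two_mul_finrank_m1_add_sum_min :
    2 * Module.finrank ℂ (m1 k μ) + ∑ a, ∑ b, min (μ a) (μ b) = (∑ r, μ r) ^ 2 := by
  rw [finrank_m1, ← card_filter_sigma_fin_val_eq,
    two_mul_card_lt_add_card_eq fun t : Box k μ => t.2.val, Fintype.card_sigma]
  simp

end Box

theorem stmt17_general
    (k : ℕ) (n : ℕ) (μ : Fin k → ℕ)
    (hn : ∑ r : Fin k, μ r = n) :
    (∀ x ∈ m1 k μ, e1 k μ * x - x * e1 k μ = 0 → x = 0)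
    ∧ 2 * Module.finrank ℂ (m1 k μ) =
        n ^ 2 - ∑ a : Fin k, ∑ b : Fin k, min (μ a) (μ b)
    ∧ (∀ x ∈ m1 k μ, ∀ y ∈ m1 k μ, (e1 k μ * (x * y - y * x)).trace = 0) := by
  refine ⟨fun x hx hc => eq_zero_of_mem_m1_of_commute_e1 hx (sub_eq_zero.1 hc), ?_,
    fun x hx y hy => trace_e1_mul_eq_zero fun t u h => ?_⟩
  · have hdim := two_mul_finrank_m1_add_sum_min (μ := μ)
    rw [hn] at hdim
    omega
  · rw [Matrix.sub_apply, mul_apply_eq_zero_of_mem_m1 hx hy h,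
      mul_apply_eq_zero_of_mem_m1 hy hx h, sub_zero]

/-- `m₁` is a Premet subalgebra for `e₁`: it meets the centralizer of
`e₁` trivially, its dimension is half the dimension of the nilpotent orbit of `e₁`, and
`χ₁` restricts to a character of `m₁`. -/
theorem stmt17
    (k : ℕ) (n : ℕ) (μ : Fin k → ℕ)
    (hpos : ∀ r, 0 < μ r) (hanti : Antitone μ)
    (hn : ∑ r : Fin k, μ r = n) :
    (∀ x ∈ m1 k μ, e1 k μ * x - x * e1 k μ = 0 → x = 0)
    ∧ 2 * Module.finrank ℂ (m1 k μ) =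
        n ^ 2 - ∑ a : Fin k, ∑ b : Fin k, min (μ a) (μ b)
    ∧ (∀ x ∈ m1 k μ, ∀ y ∈ m1 k μ, (e1 k μ * (x * y - y * x)).trace = 0) :=
  stmt17_general k n μ hn
end
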